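/- (Recovery of the fully connected graph-state stabilizer conditions) Let N ≥ 2, 3 ≤ k ≤ N, let A_0^{(i)}, A_1^{(i)} be binary observables on ℂ^{d_i} (i = 1,…,k−1), M_v binary observables on ℂ^{d_D} (v ∈ {0,1}^{N−k+1}), and let ψ be a unit vector with ⟨ψ, Ŝ_N^+ ψ⟩ = 2^{N−1}√2. Fix any v ∈ {0,1}^{N−k} and define: Z_1 = −(A_0^{(1)}+A_1^{(1)})/√2, X_1 = (A_0^{(1)}−A_1^{(1)})/√2; Z_i = A_0^{(i)}, X_i = A_1^{(i)} for i = 2,…,k−1; and, with ω = w(v): if ω is even, Z_k = (−1)^{ω(ω+1)/2} M_{(0,v)} and X_k = −(−1)^{(ω+1)(ω+2)/2} M_{(1,v)}; if ω is odd, X_k = −(−1)^{ω(ω+1)/2} M_{(0,v)} and Z_k = (−1)^{(ω+1)(ω+2)/2} M_{(1,v)}. Then for every i = 1,…,k the stabilizing condition (X_i ⊗ ⊗_{j≠i} Z_j) ψ = ψ holds, where the operators act on their respective tensor factors. -/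

import Mathlib

open Matrix

noncomputable section

/-- Hamming weight of a bit string. -/
def wt {n : ℕ} (x : Fin n → Fin 2) : ℕ := ∑ i, (x i : ℕ)

/-- The Svetlichny sign `(-1)^{w(x)(w(x)+1)/2}`. -/
def sgn {n : ℕ} (x : Fin n → Fin 2) : ℂ := (-1) ^ (wt x * (wt x + 1) / 2)

/-- The joint Hilbert-space index of `t+2` honest parties (local dimensions `d i`) and the
grouped dishonest parties (dimension `dD`). -/
abbrev FullIdx (t : ℕ) (d : Fin (t + 2) → ℕ) (dD : ℕ) :=
  ((i : Fin (t + 2)) → Fin (d i)) × Fin dD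

/-- The tensor-product observable
`A^{(1)}_{x_1} ⊗ ⋯ ⊗ A^{(k-1)}_{x_{k-1}} ⊗ M_{(x_k,…,x_N)}`, written entrywise.
Here the `k - 1 = t + 2` honest parties have binary observables `A i b`, and the grouped
dishonest parties have joint binary observables `M v` for `v ∈ {0,1}^{N-k+1}`, `N-k+1 = s+1`. -/
def bigOp {t s : ℕ} {d : Fin (t + 2) → ℕ} {dD : ℕ}
    (A : (i : Fin (t + 2)) → Fin 2 → Matrix (Fin (d i)) (Fin (d i)) ℂ)
    (M : (Fin (s + 1) → Fin 2) → Matrix (Fin dD) (Fin dD) ℂ)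
    (x : Fin (t + 2 + (s + 1)) → Fin 2) :
    Matrix (FullIdx t d dD) (FullIdx t d dD) ℂ :=
  Matrix.of fun p q =>
    (∏ i, A i (x (Fin.castAdd (s + 1) i)) (p.1 i) (q.1 i)) *
      M (fun j => x (Fin.natAdd (t + 2) j)) p.2 q.2

/-- The Svetlichny–Bell operator `Ŝ_N^+` with a grouped dishonest set
(`N = (t+2) + (s+1)`). -/
def svetOp {t s : ℕ} {d : Fin (t + 2) → ℕ} {dD : ℕ}
    (A : (i : Fin (t + 2)) → Fin 2 → Matrix (Fin (d i)) (Fin (d i)) ℂ)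
    (M : (Fin (s + 1) → Fin 2) → Matrix (Fin dD) (Fin dD) ℂ) :
    Matrix (FullIdx t d dD) (FullIdx t d dD) ℂ :=
  ∑ x : Fin (t + 2 + (s + 1)) → Fin 2, sgn x • bigOp A M x

/-- The `Z` observable of honest party `i`: `Z_1 = -(A_0^{(1)}+A_1^{(1)})/√2` and
`Z_i = A_0^{(i)}` for `i = 2,…,k-1`. -/
def Zop {t : ℕ} {d : Fin (t + 2) → ℕ}
    (A : (i : Fin (t + 2)) → Fin 2 → Matrix (Fin (d i)) (Fin (d i)) ℂ)
    (i : Fin (t + 2)) : Matrix (Fin (d i)) (Fin (d i)) ℂ :=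
  Fin.cases (-(((Real.sqrt 2 : ℂ))⁻¹ • (A 0 0 + A 0 1))) (fun j => A j.succ 0) i

/-- The `X` observable of honest party `i`: `X_1 = (A_0^{(1)}-A_1^{(1)})/√2` and
`X_i = A_1^{(i)}` for `i = 2,…,k-1`. -/
def Xop {t : ℕ} {d : Fin (t + 2) → ℕ}
    (A : (i : Fin (t + 2)) → Fin 2 → Matrix (Fin (d i)) (Fin (d i)) ℂ)
    (i : Fin (t + 2)) : Matrix (Fin (d i)) (Fin (d i)) ℂ :=
  Fin.cases (((Real.sqrt 2 : ℂ))⁻¹ • (A 0 0 - A 0 1)) (fun j => A j.succ 1) i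

/-- The `Z` observable of the grouped dishonest parties, for a fixed tail `v ∈ {0,1}^{N-k}`:
`Z_k = (-1)^{ω(ω+1)/2} M_{(0,v)}` if `ω = w(v)` is even, and
`Z_k = (-1)^{(ω+1)(ω+2)/2} M_{(1,v)}` if `ω` is odd. -/
def ZopD {s : ℕ} {dD : ℕ}
    (M : (Fin (s + 1) → Fin 2) → Matrix (Fin dD) (Fin dD) ℂ)
    (v : Fin s → Fin 2) : Matrix (Fin dD) (Fin dD) ℂ :=
  if Even (wt v) then
    ((-1 : ℂ) ^ (wt v * (wt v + 1) / 2)) • M (Fin.cons 0 v)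
  else
    ((-1 : ℂ) ^ ((wt v + 1) * (wt v + 2) / 2)) • M (Fin.cons 1 v)

/-- The `X` observable of the grouped dishonest parties, for a fixed tail `v ∈ {0,1}^{N-k}`:
`X_k = -(-1)^{(ω+1)(ω+2)/2} M_{(1,v)}` if `ω = w(v)` is even, and
`X_k = -(-1)^{ω(ω+1)/2} M_{(0,v)}` if `ω` is odd. -/
def XopD {s : ℕ} {dD : ℕ}
    (M : (Fin (s + 1) → Fin 2) → Matrix (Fin dD) (Fin dD) ℂ)
    (v : Fin s → Fin 2) : Matrix (Fin dD) (Fin dD) ℂ :=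
  if Even (wt v) then
    (-((-1 : ℂ) ^ ((wt v + 1) * (wt v + 2) / 2))) • M (Fin.cons 1 v)
  else
    (-((-1 : ℂ) ^ (wt v * (wt v + 1) / 2))) • M (Fin.cons 0 v)

/-- The stabilizer generator `Ŝ_i = X_i ⊗ ⨂_{j ≠ i} Z_j` of the fully connected graph state
on the `k = t + 3` sites (the `t + 2` honest parties and the grouped dishonest parties),
written entrywise. -/
def stabOp {t s : ℕ} {d : Fin (t + 2) → ℕ} {dD : ℕ}
    (A : (i : Fin (t + 2)) → Fin 2 → Matrix (Fin (d i)) (Fin (d i)) ℂ)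
    (M : (Fin (s + 1) → Fin 2) → Matrix (Fin dD) (Fin dD) ℂ)
    (v : Fin s → Fin 2) (i : Fin (t + 3)) :
    Matrix (FullIdx t d dD) (FullIdx t d dD) ℂ :=
  Matrix.of fun p q =>
    (∏ j : Fin (t + 2),
      (if (j : ℕ) = (i : ℕ) then Xop A j else Zop A j) (p.1 j) (q.1 j)) *
      (if (i : ℕ) = t + 2 then XopD M v else ZopD M v) p.2 q.2

/-!
The Svetlichny operator splits as `Ŝ = √2 ∑_z G_z` over `2^{N-1}` Hermitian operators indexed by
`z = (u, v, b)`, `G_z = R_w ⊗ A^{(2)}_{u_1} ⊗ ⋯ ⊗ A^{(k-1)}_{u_{k-2}} ⊗ N_b`, where `R_w` is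
`(± A_0^{(1)} ± A_1^{(1)}) / √2` with signs depending on `w = w(u) + b`, and `N_b` is `Z_k` or
`X_k`. Pairing `b = 0` with `b = 1` cancels the anticommutator terms of `R_w²`, so
`∑_z G_z² = 2^{N-1}`. For a unit state with `⟨Ŝ⟩ = 2^{N-1}√2` this forces
`∑_z ‖G_z ψ - ψ‖² = ∑_z ⟨G_z²⟩ - 2 ∑_z ⟨G_z⟩ + 2^{N-1} = 0`, so every `G_z` fixes `ψ`, and each
stabilizer generator `X_i ⊗ ⨂_{j ≠ i} Z_j` is one of the `G_z`.
-/

open scoped ComplexOrder Kronecker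

namespace Matrix

theorem mulVec_eq_self_of_sum_mul_self {𝕜 ι n : Type*} [RCLike 𝕜] [Fintype ι] [Fintype n]
    [DecidableEq n] (G : ι → Matrix n n 𝕜) (hG : ∀ z, (G z).IsHermitian)
    (hsq : ∑ z, G z * G z = (Fintype.card ι : 𝕜) • 1) (ψ : n → 𝕜) (hψ : star ψ ⬝ᵥ ψ = 1)
    (hsum : ∑ z, star ψ ⬝ᵥ (G z *ᵥ ψ) = Fintype.card ι) (z : ι) :
    G z *ᵥ ψ = ψ := by
  have hdist : ∀ z, star (G z *ᵥ ψ - ψ) ⬝ᵥ (G z *ᵥ ψ - ψ) =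
      star ψ ⬝ᵥ ((G z * G z) *ᵥ ψ) - 2 * star ψ ⬝ᵥ (G z *ᵥ ψ) + 1 := by
    intro z
    rw [star_sub, star_mulVec, (hG z).eq, sub_dotProduct, dotProduct_sub, dotProduct_sub,
      ← dotProduct_mulVec, ← dotProduct_mulVec, mulVec_mulVec, hψ]
    ring
  have hzero : ∑ z, star (G z *ᵥ ψ - ψ) ⬝ᵥ (G z *ᵥ ψ - ψ) = 0 := by
    simp only [hdist, Finset.sum_add_distrib, Finset.sum_sub_distrib, ← Finset.mul_sum,
      ← dotProduct_sum, ← sum_mulVec, hsq, hsum, smul_mulVec, one_mulVec, dotProduct_smul, hψ,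
      smul_eq_mul, mul_one, Finset.sum_const, Finset.card_univ, nsmul_eq_mul]
    ring
  have := (Fintype.sum_eq_zero_iff_of_nonneg fun z => dotProduct_star_self_nonneg _).mp hzero
  exact sub_eq_zero.mp (dotProduct_star_self_eq_zero.mp (congrFun this z))


section piKron

variable {ι R : Type*} [Fintype ι] {m n l : ι → Type*}

def piKron [CommMonoid R] (C : ∀ i, Matrix (m i) (n i) R) : Matrix (∀ i, m i) (∀ i, n i) R :=
  of fun p q => ∏ i, C i (p i) (q i)

theorem piKron_mul [CommSemiring R] [DecidableEq ι] [∀ i, Fintype (n i)]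
    (C : ∀ i, Matrix (m i) (n i) R) (D : ∀ i, Matrix (n i) (l i) R) :
    piKron C * piKron D = piKron fun i => C i * D i := by
  ext p q
  simp only [piKron, mul_apply, of_apply, ← Finset.prod_mul_distrib]
  rw [Finset.prod_univ_sum, Fintype.piFinset_univ]

theorem piKron_one [CommSemiring R] [∀ i, DecidableEq (m i)] :
    piKron (fun i => (1 : Matrix (m i) (m i) R)) = 1 := by
  ext p q
  by_cases h : p = q
  · subst h
    simp [piKron, one_apply]
  · obtain ⟨i, hi⟩ := Function.ne_iff.mp h
    simp only [piKron, of_apply, one_apply, h, if_false]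
    exact Finset.prod_eq_zero (Finset.mem_univ i) (if_neg hi)

theorem conjTranspose_piKron [CommSemiring R] [StarRing R] (C : ∀ i, Matrix (m i) (n i) R) :
    (piKron C)ᴴ = piKron fun i => (C i)ᴴ := by
  ext p q
  simp [piKron, star_prod]

end piKron

section piKronCons

variable {k : ℕ} {R : Type*} [CommSemiring R] {m n : Fin (k + 1) → Type*}

theorem piKron_cons_add (P P' : Matrix (m 0) (n 0) R)
    (Q : ∀ j : Fin k, Matrix (m j.succ) (n j.succ) R) :
    piKron (m := m) (n := n) (Fin.cons (P + P') Q) =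
      piKron (m := m) (n := n) (Fin.cons P Q) +
        piKron (m := m) (n := n) (Fin.cons P' Q) := by
  ext p q
  simp [piKron, Fin.prod_univ_succ, add_mul]

theorem piKron_cons_smul (c : R) (P : Matrix (m 0) (n 0) R)
    (Q : ∀ j : Fin k, Matrix (m j.succ) (n j.succ) R) :
    piKron (m := m) (n := n) (Fin.cons (c • P) Q) =
      c • piKron (m := m) (n := n) (Fin.cons P Q) := by
  ext p q
  simp [piKron, Fin.prod_univ_succ, mul_assoc]

theorem piKron_cons_mul {l : Fin (k + 1) → Type*} [∀ i, Fintype (n i)]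
    (P : Matrix (m 0) (n 0) R) (Q : ∀ j : Fin k, Matrix (m j.succ) (n j.succ) R)
    (P' : Matrix (n 0) (l 0) R) (Q' : ∀ j : Fin k, Matrix (n j.succ) (l j.succ) R) :
    piKron (m := m) (n := n) (Fin.cons P Q) * piKron (m := n) (n := l) (Fin.cons P' Q') =
      piKron (m := m) (n := l) (Fin.cons (P * P') fun j => Q j * Q' j) := by
  rw [piKron_mul]
  congr 1
  ext1 i
  exact Fin.cases rfl (fun _ => rfl) i

end piKronCons

end Matrix

def svSign (n : ℕ) : ℂ := (-1) ^ (n * (n + 1) / 2)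

theorem sgn_eq_svSign {n : ℕ} (x : Fin n → Fin 2) : sgn x = svSign (wt x) := rfl

theorem svSign_add (m n : ℕ) : svSign (m + n) = svSign m * svSign n * (-1) ^ (m * n) := by
  have htri : ∀ k, k * (k + 1) / 2 * 2 = k * (k + 1) :=
    fun k => Nat.div_mul_cancel (Nat.even_mul_succ_self k).two_dvd
  have hsum : (m + n) * (m + n + 1) / 2 = m * (m + 1) / 2 + n * (n + 1) / 2 + m * n := by
    apply Nat.div_eq_of_eq_mul_left two_pos
    rw [add_mul (m * (m + 1) / 2 + n * (n + 1) / 2), add_mul (m * (m + 1) / 2), htri, htri]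
    ring
  simp only [svSign, hsum, pow_add]

theorem svSign_one : svSign 1 = -1 := by norm_num [svSign]

theorem svSign_succ (n : ℕ) : svSign (n + 1) = -svSign n * (-1) ^ n := by
  rw [svSign_add, svSign_one, mul_one]; ring

theorem svSign_add_two (n : ℕ) : svSign (n + 2) = -svSign n := by
  rw [svSign_add, show svSign 2 = -1 by norm_num [svSign], mul_comm n, pow_mul]
  norm_num

theorem svSign_mul_self (n : ℕ) : svSign n * svSign n = 1 := by
  rw [svSign, ← pow_add, ← two_mul, pow_mul]
  norm_num

section Dishonest

variable {s dD : ℕ} (M : (Fin (s + 1) → Fin 2) → Matrix (Fin dD) (Fin dD) ℂ) (v : Fin s → Fin 2)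

/-- The choice of signs in `ZopD`, `XopD` is exactly what makes the Svetlichny signs of the
dishonest block factor through them. -/
theorem svSign_smul_ZopD_add_XopD (m : ℕ) :
    svSign m • ZopD M v + svSign (m + 1) • XopD M v =
      svSign (m + wt v) • M (Fin.cons 0 v) + svSign (m + wt v + 1) • M (Fin.cons 1 v) := by
  rcases Nat.even_or_odd (wt v) with hω | hω
  · have hZ : ZopD M v = svSign (wt v) • M (Fin.cons 0 v) := if_pos hω
    have hX : XopD M v = -svSign (wt v + 1) • M (Fin.cons 1 v) := if_pos hω
    have h0 : svSign (m + wt v) = svSign m * svSign (wt v) := by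
      rw [svSign_add, (hω.mul_left m).neg_one_pow, mul_one]
    have h1 : svSign (m + wt v + 1) = svSign (m + 1) * svSign (wt v) := by
      rw [add_right_comm, svSign_add (m + 1), (hω.mul_left _).neg_one_pow, mul_one]
    have hω1 : svSign (wt v + 1) = -svSign (wt v) := by
      rw [svSign_succ, hω.neg_one_pow, mul_one]
    rw [hZ, hX, h0, h1, hω1]
    module
  · have hZ : ZopD M v = svSign (wt v + 1) • M (Fin.cons 1 v) :=
      if_neg (Nat.not_even_iff_odd.mpr hω)
    have hX : XopD M v = -svSign (wt v) • M (Fin.cons 0 v) :=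
      if_neg (Nat.not_even_iff_odd.mpr hω)
    have h0 : svSign (m + wt v) = svSign m * svSign (wt v) * (-1) ^ m := by
      rw [svSign_add, pow_mul', hω.neg_one_pow]
    have h1 : svSign (m + wt v + 1) = svSign m * svSign (wt v + 1) := by
      rw [add_assoc, svSign_add m, (hω.add_one.mul_left m).neg_one_pow, mul_one]
    rw [hZ, hX, h0, h1, svSign_succ m]
    module

end Dishonest

section Generators

variable {t s : ℕ} {d : Fin (t + 2) → ℕ} {dD : ℕ}
  (A : (i : Fin (t + 2)) → Fin 2 → Matrix (Fin (d i)) (Fin (d i)) ℂ)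
  (M : (Fin (s + 1) → Fin 2) → Matrix (Fin dD) (Fin dD) ℂ)

abbrev GenIdx (t s : ℕ) := ((Fin (t + 1) → Fin 2) × (Fin s → Fin 2)) × Fin 2

theorem card_genIdx (t s : ℕ) : Fintype.card (GenIdx t s) = 2 ^ (t + s + 2) := by
  simp only [Fintype.card_prod, Fintype.card_fun, Fintype.card_fin]
  ring

def rotatedObs (w : ℕ) : Matrix (Fin (d 0)) (Fin (d 0)) ℂ :=
  (Real.sqrt 2 : ℂ)⁻¹ • (svSign w • A 0 0 + svSign (w + 1) • A 0 1)

def dishonestObs (v : Fin s → Fin 2) (b : Fin 2) : Matrix (Fin dD) (Fin dD) ℂ :=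
  ![ZopD M v, XopD M v] b

def svGen (u : Fin (t + 1) → Fin 2) (v : Fin s → Fin 2) (b : Fin 2) :
    Matrix (FullIdx t d dD) (FullIdx t d dD) ℂ :=
  piKron (m := fun i => Fin (d i)) (n := fun i => Fin (d i))
    (Fin.cons (rotatedObs A (wt u + b)) fun j => A j.succ (u j)) ⊗ₖ dishonestObs M v b

theorem rotatedObs_isHermitian (hA : ∀ b, (A 0 b).IsHermitian) (w : ℕ) :
    (rotatedObs A w).IsHermitian := by
  simp [IsHermitian, rotatedObs, svSign, conjTranspose_smul, star_pow, (hA 0).eq, (hA 1).eq]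

theorem rotatedObs_mul_self_add (hA : ∀ b, A 0 b * A 0 b = 1) (w : ℕ) :
    rotatedObs A w * rotatedObs A w + rotatedObs A (w + 1) * rotatedObs A (w + 1) =
      (2 : ℂ) • 1 := by
  have hr : (Real.sqrt 2 : ℂ)⁻¹ * (Real.sqrt 2 : ℂ)⁻¹ = 2⁻¹ := by
    rw [← mul_inv, ← Complex.ofReal_mul, Real.mul_self_sqrt zero_le_two, Complex.ofReal_ofNat]
  have ha := svSign_mul_self w
  have hb := svSign_mul_self (w + 1)
  simp only [rotatedObs, add_assoc, one_add_one_eq_two, svSign_add_two, smul_mul_smul_comm,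
    mul_add, add_mul, smul_add, hA 0, hA 1, hr, neg_mul, mul_neg, neg_smul, smul_neg]
  linear_combination (norm := module) (ha + hb) • (1 : Matrix (Fin (d 0)) (Fin (d 0)) ℂ)

theorem dishonestObs_isHermitian (hM : ∀ w, (M w).IsHermitian) (v : Fin s → Fin 2) (b : Fin 2) :
    (dishonestObs M v b).IsHermitian := by
  fin_cases b <;> simp only [dishonestObs, ZopD, XopD] <;> split_ifs <;>
    simp [IsHermitian, conjTranspose_smul, star_pow, (hM _).eq]

theorem dishonestObs_mul_self (hM : ∀ w, M w * M w = 1) (v : Fin s → Fin 2) (b : Fin 2) :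
    dishonestObs M v b * dishonestObs M v b = 1 := by
  fin_cases b <;> simp only [dishonestObs, ZopD, XopD] <;> split_ifs <;>
    simp [hM, smul_smul, ← mul_pow]

theorem svGen_isHermitian (hA : ∀ i b, (A i b).IsHermitian) (hM : ∀ w, (M w).IsHermitian)
    (u : Fin (t + 1) → Fin 2) (v : Fin s → Fin 2) (b : Fin 2) :
    (svGen A M u v b).IsHermitian := by
  rw [IsHermitian, svGen, conjTranspose_kronecker, conjTranspose_piKron,
    (dishonestObs_isHermitian M hM v b).eq]
  congr 2
  ext1 i
  refine Fin.cases ?_ (fun j => ?_) i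
  · exact (rotatedObs_isHermitian A (hA 0) _).eq
  · exact (hA j.succ (u j)).eq

theorem sum_svGen_mul_self (hA : ∀ i b, A i b * A i b = 1) (hM : ∀ w, M w * M w = 1)
    (u : Fin (t + 1) → Fin 2) (v : Fin s → Fin 2) :
    ∑ b, svGen A M u v b * svGen A M u v b = (2 : ℂ) • 1 := by
  have hone : (Fin.cons 1 fun j => 1 : ∀ i, Matrix (Fin (d i)) (Fin (d i)) ℂ) = fun _ => 1 :=
    Fin.cons_self_tail (fun i => (1 : Matrix (Fin (d i)) (Fin (d i)) ℂ))
  simp only [svGen, ← mul_kronecker_mul, piKron_cons_mul, hA, dishonestObs_mul_self M hM,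
    Fin.sum_univ_two, Fin.val_zero, Fin.val_one, add_zero, ← add_kronecker, ← piKron_cons_add,
    rotatedObs_mul_self_add A (hA 0), piKron_cons_smul, hone, piKron_one, smul_kronecker,
    one_kronecker_one]

theorem sum_genIdx_svGen_mul_self (hA : ∀ i b, A i b * A i b = 1) (hM : ∀ w, M w * M w = 1) :
    ∑ z : GenIdx t s, svGen A M z.1.1 z.1.2 z.2 * svGen A M z.1.1 z.1.2 z.2 =
      (Fintype.card (GenIdx t s) : ℂ) • 1 := by
  rw [Fintype.sum_prod_type]
  simp only [sum_svGen_mul_self A M hA hM, Finset.sum_const, Finset.card_univ, Fintype.card_prod,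
    Fintype.card_fin, Nat.cast_mul, mul_smul, Nat.cast_smul_eq_nsmul, Nat.cast_ofNat]

theorem sqrt_two_smul_svGen (u : Fin (t + 1) → Fin 2) (v : Fin s → Fin 2) (b : Fin 2) :
    (Real.sqrt 2 : ℂ) • svGen A M u v b =
      svSign (wt u + b) •
          (piKron (fun i => A i ((Fin.cons 0 u : Fin (t + 2) → Fin 2) i)) ⊗ₖ
            dishonestObs M v b) +
        svSign (wt u + b + 1) •
          (piKron (fun i => A i ((Fin.cons 1 u : Fin (t + 2) → Fin 2) i)) ⊗ₖ
            dishonestObs M v b) := by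
  have hcons : ∀ a, (fun i => A i ((Fin.cons a u : Fin (t + 2) → Fin 2) i)) =
      Fin.cons (A 0 a) fun j => A j.succ (u j) :=
    fun a => funext fun i => Fin.cases rfl (fun _ => rfl) i
  have hsqrt : (Real.sqrt 2 : ℂ) ≠ 0 := by simp
  rw [hcons, hcons]
  simp only [svGen, rotatedObs, piKron_cons_smul, piKron_cons_add, smul_kronecker, add_kronecker,
    smul_smul, mul_inv_cancel₀ hsqrt, one_smul]

theorem wt_cons {n : ℕ} (a : Fin 2) (u : Fin n → Fin 2) : wt (Fin.cons a u) = wt u + a := by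
  simp [wt, Fin.sum_univ_succ, add_comm]

theorem wt_append {m n : ℕ} (y : Fin m → Fin 2) (z : Fin n → Fin 2) :
    wt (Fin.append y z) = wt y + wt z := by
  simp [wt, Fin.sum_univ_add]

theorem bigOp_append (y : Fin (t + 2) → Fin 2) (z : Fin (s + 1) → Fin 2) :
    bigOp A M (Fin.append y z) = piKron (fun i => A i (y i)) ⊗ₖ M z := by
  ext p q
  simp [bigOp, piKron]

theorem svetOp_eq_sum :
    svetOp A M = ∑ uv : (Fin (t + 1) → Fin 2) × (Fin s → Fin 2), ∑ ab : Fin 2 × Fin 2,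
      svSign (wt uv.1 + ab.1 + wt uv.2 + ab.2) •
        (piKron (fun i => A i ((Fin.cons ab.1 uv.1 : Fin (t + 2) → Fin 2) i)) ⊗ₖ
          M (Fin.cons ab.2 uv.2)) := by
  let e : ((Fin (t + 1) → Fin 2) × (Fin s → Fin 2)) × (Fin 2 × Fin 2) ≃
      (Fin (t + 2 + (s + 1)) → Fin 2) :=
    (Equiv.prodComm _ _).trans <| (Equiv.prodProdProdComm _ _ _ _).trans <|
      ((Fin.consEquiv _).prodCongr (Fin.consEquiv _)).trans (Fin.appendEquiv _ _)
  rw [svetOp, ← e.sum_comp, Fintype.sum_prod_type]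
  refine Finset.sum_congr rfl fun uv _ => Finset.sum_congr rfl fun ab _ => ?_
  change sgn (Fin.append (Fin.cons ab.1 uv.1 : Fin (t + 2) → Fin 2) (Fin.cons ab.2 uv.2)) •
    bigOp A M (Fin.append (Fin.cons ab.1 uv.1 : Fin (t + 2) → Fin 2) (Fin.cons ab.2 uv.2)) = _
  rw [sgn_eq_svSign, wt_append, wt_cons, wt_cons, bigOp_append, ← add_assoc]

theorem svetOp_eq_sqrt_two_smul_sum_svGen :
    svetOp A M = (Real.sqrt 2 : ℂ) • ∑ z : GenIdx t s, svGen A M z.1.1 z.1.2 z.2 := by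
  simp only [svetOp_eq_sum, Finset.smul_sum, Fintype.sum_prod_type, Fin.sum_univ_two, smul_add,
    sqrt_two_smul_svGen]
  refine Finset.sum_congr rfl fun u _ => Finset.sum_congr rfl fun v _ => ?_
  simp only [Fin.val_zero, Fin.val_one, add_zero, dishonestObs, cons_val_zero, cons_val_one]
  simp only [← kronecker_smul, ← kronecker_add]
  rw [← svSign_smul_ZopD_add_XopD, ← svSign_smul_ZopD_add_XopD]
  simp only [kronecker_add, kronecker_smul]
  abel

end Generators

section Stabilizers

variable {t s : ℕ} {d : Fin (t + 2) → ℕ} {dD : ℕ}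
  (A : (i : Fin (t + 2)) → Fin 2 → Matrix (Fin (d i)) (Fin (d i)) ℂ)
  (M : (Fin (s + 1) → Fin 2) → Matrix (Fin dD) (Fin dD) ℂ) (v : Fin s → Fin 2)

theorem rotatedObs_zero : rotatedObs A 0 = Xop A 0 := by
  simp [rotatedObs, Xop, svSign, sub_eq_add_neg]

theorem rotatedObs_one : rotatedObs A 1 = Zop A 0 := by
  rw [rotatedObs, Zop, Fin.cases_zero, svSign_one, show svSign (1 + 1) = -1 by norm_num [svSign]]
  module

theorem stabOp_eq_kronecker (i : Fin (t + 3)) :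
    stabOp A M v i =
      piKron (fun j : Fin (t + 2) => if (j : ℕ) = (i : ℕ) then Xop A j else Zop A j) ⊗ₖ
        (if (i : ℕ) = t + 2 then XopD M v else ZopD M v) := rfl

theorem wt_zero {n : ℕ} : wt (0 : Fin n → Fin 2) = 0 := by simp [wt]

theorem wt_single {n : ℕ} (l : Fin n) : wt (Pi.single l 1 : Fin n → Fin 2) = 1 := by
  simp [wt, Pi.single_apply, apply_ite]

theorem stabOp_zero : stabOp A M v 0 = svGen A M 0 v 0 := by
  simp only [stabOp_eq_kronecker, svGen, wt_zero, Fin.val_zero, add_zero, rotatedObs_zero]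
  congr 1
  congr 1
  ext1 j
  exact Fin.cases (by simp) (fun l => by simp [Zop]) j

theorem stabOp_last : stabOp A M v (Fin.last (t + 2)) = svGen A M 0 v 1 := by
  simp only [stabOp_eq_kronecker, svGen, wt_zero, Fin.val_one, zero_add, rotatedObs_one]
  congr 1
  · congr 1
    ext1 j
    refine Fin.cases (by simp) (fun l => ?_) j
    rw [if_neg (by rw [Fin.val_last]; exact l.succ.isLt.ne)]
    rfl
  · simp [dishonestObs]

theorem stabOp_succ_castSucc (l : Fin (t + 1)) :
    stabOp A M v l.castSucc.succ = svGen A M (Pi.single l 1) v 0 := by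
  simp only [stabOp_eq_kronecker, svGen, wt_single, Fin.val_zero, add_zero, rotatedObs_one]
  congr 1
  · congr 1
    ext1 j
    refine Fin.cases (by simp) (fun j => ?_) j
    by_cases h : j = l
    · subst h; simp [Xop]
    · simp [Zop, Pi.single_apply, h, Fin.val_inj]
  · have hl : ((l.castSucc.succ : Fin (t + 3)) : ℕ) ≠ t + 2 := by
      rw [Fin.val_succ, Fin.val_castSucc]
      omega
    rw [if_neg hl]
    rfl

end Stabilizers

/-- Recovery of the fully connected graph-state stabilizer conditions: a unit state maximally
violating the `N`-partite Svetlichny inequality (`N = (t+2)+(s+1)`, with `k - 1 = t + 2`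
honest parties, so `3 ≤ k ≤ N`) is stabilized by all `k = t + 3` generators
`X_i ⊗ ⨂_{j ≠ i} Z_j`, for any fixed tail `v ∈ {0,1}^{N-k}`. -/
theorem stmt_11 (t s : ℕ) (d : Fin (t + 2) → ℕ) (dD : ℕ)
    (A : (i : Fin (t + 2)) → Fin 2 → Matrix (Fin (d i)) (Fin (d i)) ℂ)
    (M : (Fin (s + 1) → Fin 2) → Matrix (Fin dD) (Fin dD) ℂ)
    (hAherm : ∀ i b, (A i b).IsHermitian) (hAsq : ∀ i b, A i b * A i b = 1)
    (hMherm : ∀ w, (M w).IsHermitian) (hMsq : ∀ w, M w * M w = 1)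
    (ψ : FullIdx t d dD → ℂ) (hψ : (∑ p, ‖ψ p‖ ^ 2) = 1)
    (hmax : ∑ p, (starRingEnd ℂ) (ψ p) * (svetOp A M).mulVec ψ p =
      ((2 ^ (t + s + 2) * Real.sqrt 2 : ℝ) : ℂ))
    (v : Fin s → Fin 2) :
    ∀ i : Fin (t + 3), (stabOp A M v i).mulVec ψ = ψ := by
  have hunit : star ψ ⬝ᵥ ψ = 1 := by
    simp only [dotProduct, Pi.star_apply, Complex.star_def, Complex.conj_mul']
    exact_mod_cast hψ
  have hsum : ∑ z : GenIdx t s, star ψ ⬝ᵥ (svGen A M z.1.1 z.1.2 z.2 *ᵥ ψ) =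
      Fintype.card (GenIdx t s) := by
    have hsqrt : (Real.sqrt 2 : ℂ) ≠ 0 := by simp
    rw [← dotProduct_sum, ← sum_mulVec, ← inv_smul_smul₀ hsqrt (∑ z : GenIdx t s, _),
      ← svetOp_eq_sqrt_two_smul_sum_svGen, smul_mulVec, dotProduct_smul, card_genIdx]
    change (Real.sqrt 2 : ℂ)⁻¹ • ∑ p, (starRingEnd ℂ) (ψ p) * (svetOp A M).mulVec ψ p = _
    rw [hmax, smul_eq_mul]
    push_cast
    field_simp
  have hstab := mulVec_eq_self_of_sum_mul_self (fun z : GenIdx t s => svGen A M z.1.1 z.1.2 z.2)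
    (fun z => svGen_isHermitian A M hAherm hMherm z.1.1 z.1.2 z.2)
    (sum_genIdx_svGen_mul_self A M hAsq hMsq) ψ hunit hsum
  refine Fin.cases ?_ (Fin.lastCases ?_ fun l => ?_)
  · rw [stabOp_zero]
    exact hstab ((0, v), 0)
  · rw [Fin.succ_last, stabOp_last]
    exact hstab ((0, v), 1)
  · rw [stabOp_succ_castSucc]
    exact hstab ((Pi.single l 1, v), 0)
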